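/- Let (β_t) be standard Brownian motion, g ∈ C([0,T]) deterministic, and for n ≥ 1 set Jₙ(t) = ∫_{[2ⁿt]/2ⁿ}^{t} g(s) dβ(s). Then E[ sup_{0≤t≤T} |Jₙ(t)|² ] → 0 as n → ∞. -/

import Mathlib

/-!
Lévy–Kolmogorov chaining along dyadic grids. For `t ∈ [0, T]`, `M t - M (⌊2ⁿt⌋/2ⁿ)` telescopes
through the successive dyadic approximations of `t`, and two consecutive ones, of levels `m - 1`
and `m`, differ by at most one level-`m` dyadic interval inside `[0, T]`. Hence the supremum over
`t` is bounded by `∑_{m > n} D_m`, where `D_m` is the `ℓ⁴` norm of all level-`m` increments of `M`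
on `[0, T]`. These increments are centred Gaussians of variance `≤ K 2⁻ᵐ` (with `K ≥ g²` on
`[0, T]`), and there are at most `2ᵐT` of them, so `E D_m⁴ ≤ C 2⁻ᵐ` and
`‖D_m‖_{L²} ≤ ‖D_m‖_{L⁴} ≤ C' 2^{-m/4}`. By Minkowski's inequality the `L²` norm of the supremum is
at most the tail `∑_{m > n} ‖D_m‖_{L²}` of a convergent series.
-/

open MeasureTheory ProbabilityTheory Filter Topology
open scoped NNReal ENNReal

lemma MeasureTheory.eLpNorm_tsum_le {α : Type*} {mα : MeasurableSpace α} {μ : Measure α}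
    {f : ℕ → α → ℝ≥0∞} (hf : ∀ i, AEMeasurable (f i) μ) {p : ℝ≥0∞} (hp1 : 1 ≤ p) (hp : p ≠ ∞) :
    eLpNorm (fun x => ∑' i, f i x) p μ ≤ ∑' i, eLpNorm (f i) p μ := by
  have hp0 : p ≠ 0 := (zero_lt_one.trans_le hp1).ne'
  have hq : 0 < p.toReal := ENNReal.toReal_pos hp0 hp
  have hpartial : ∀ N, ∫⁻ x, (∑ i ∈ Finset.range N, f i x) ^ p.toReal ∂μ
      ≤ (∑' i, eLpNorm (f i) p μ) ^ p.toReal := fun N => by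
    have h := (eLpNorm_sum_le (fun i _ => (hf i).aestronglyMeasurable) hp1).trans
      (ENNReal.sum_le_tsum (Finset.range N))
    rw [eLpNorm_eq_lintegral_rpow_enorm_toReal hp0 hp, one_div, ENNReal.rpow_inv_le_iff hq] at h
    simpa only [Finset.sum_apply, enorm_eq_self] using h
  have hsup : ∀ x, (∑' i, f i x) ^ p.toReal = ⨆ N, (∑ i ∈ Finset.range N, f i x) ^ p.toReal :=
    fun x => by
      rw [ENNReal.tsum_eq_iSup_nat]
      exact (ENNReal.orderIsoRpow _ hq).map_iSup fun N => ∑ i ∈ Finset.range N, f i x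
  rw [eLpNorm_eq_lintegral_rpow_enorm_toReal hp0 hp, one_div, ENNReal.rpow_inv_le_iff hq]
  simp only [enorm_eq_self, hsup]
  rw [lintegral_iSup' (fun N => (Finset.aemeasurable_fun_sum _ fun i _ => hf i).pow_const _)
    (ae_of_all _ fun x N N' h => ENNReal.rpow_le_rpow
      (Finset.sum_le_sum_of_subset (Finset.range_mono h)) hq.le)]
  exact iSup_le hpartial

lemma MeasureTheory.lintegral_sq_eq_eLpNorm_sq {α : Type*} {mα : MeasurableSpace α} {μ : Measure α}
    (g : α → ℝ≥0∞) : ∫⁻ x, g x ^ 2 ∂μ = eLpNorm g 2 μ ^ 2 := by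
  have h := eLpNorm_nnreal_pow_eq_lintegral (f := g) (μ := μ) (p := 2) two_ne_zero
  simp only [NNReal.coe_ofNat, ENNReal.coe_ofNat, enorm_eq_self, ENNReal.rpow_ofNat] at h
  exact h.symm

lemma ENNReal.ofReal_iSup_le {ι : Sort*} {x : ι → ℝ} {B : ℝ≥0∞}
    (h : ∀ i, ENNReal.ofReal (x i) ≤ B) : ENNReal.ofReal (⨆ i, x i) ≤ B := by
  rcases eq_or_ne B ∞ with rfl | hB
  · exact le_top
  exact ENNReal.ofReal_le_of_le_toReal
    (Real.iSup_le (fun i => (ENNReal.ofReal_le_iff_le_toReal hB).1 (h i)) ENNReal.toReal_nonneg)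

lemma toNNReal_intervalIntegral_le_of_norm_le {f : ℝ → ℝ} {a b C : ℝ} (hab : a ≤ b)
    (h : ∀ x ∈ Set.Icc a b, ‖f x‖ ≤ C) :
    ((∫ x in a..b, f x).toNNReal : ℝ) ≤ C * (b - a) := by
  have hC : 0 ≤ C := (norm_nonneg _).trans (h a ⟨le_rfl, hab⟩)
  rw [Real.coe_toNNReal']
  refine max_le ?_ (mul_nonneg hC (sub_nonneg.2 hab))
  calc ∫ x in a..b, f x ≤ ‖∫ x in a..b, f x‖ := Real.le_norm_self _
    _ ≤ C * |b - a| := intervalIntegral.norm_integral_le_of_norm_le_const fun x hx =>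
        h x (Set.Ioc_subset_Icc_self (by rwa [Set.uIoc_of_le hab] at hx))
    _ = C * (b - a) := by rw [abs_of_nonneg (sub_nonneg.2 hab)]

lemma lintegral_enorm_pow_gaussianReal_lt_top (μ : ℝ) (v : ℝ≥0) (p : ℕ) :
    ∫⁻ x, ‖x‖ₑ ^ p ∂gaussianReal μ v < ∞ := by
  rcases eq_or_ne p 0 with rfl | hp
  · simp
  have h := lintegral_rpow_enorm_lt_top_of_eLpNorm_lt_top (by exact_mod_cast hp)
    ENNReal.coe_ne_top (memLp_id_gaussianReal (μ := μ) (v := v) p).eLpNorm_lt_top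
  simpa using h

lemma lintegral_enorm_pow_gaussianReal (v : ℝ≥0) (p : ℕ) :
    ∫⁻ x, ‖x‖ₑ ^ (2 * p) ∂gaussianReal 0 v = v ^ p * ∫⁻ x, ‖x‖ₑ ^ (2 * p) ∂gaussianReal 0 1 := by
  have hmap : (gaussianReal 0 1).map ((NNReal.sqrt v : ℝ) * ·) = gaussianReal 0 v := by
    rw [gaussianReal_map_const_mul, mul_zero]
    congr
    ext
    simp
  rw [← hmap, lintegral_map (by fun_prop) (by fun_prop), ← lintegral_const_mul _ (by fun_prop)]
  congr with x
  rw [enorm_mul, mul_pow, pow_mul, Real.enorm_of_nonneg NNReal.zero_le_coe]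
  congr
  rw [← ENNReal.ofReal_pow NNReal.zero_le_coe]
  simp

noncomputable def dyadicFloor (n : ℕ) (t : ℝ) : ℝ := ⌊(2 : ℝ) ^ n * t⌋ / 2 ^ n

lemma dyadicFloor_eq_natFloor (n : ℕ) {t : ℝ} (ht : 0 ≤ t) :
    dyadicFloor n t = ⌊(2 : ℝ) ^ n * t⌋₊ / 2 ^ n := by
  rw [dyadicFloor, natCast_floor_eq_intCast_floor (by positivity)]

lemma tendsto_dyadicFloor (t : ℝ) : Tendsto (fun n => dyadicFloor n t) atTop (𝓝 t) := by
  have hlow : ∀ n : ℕ, t - ((2 : ℝ) ^ n)⁻¹ ≤ dyadicFloor n t := fun n => by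
    rw [dyadicFloor, le_div_iff₀ (by positivity), sub_mul, inv_mul_cancel₀ (by positivity)]
    linarith [Int.lt_floor_add_one ((2 : ℝ) ^ n * t)]
  have hup : ∀ n : ℕ, dyadicFloor n t ≤ t := fun n => by
    rw [dyadicFloor, div_le_iff₀ (by positivity), mul_comm]
    exact Int.floor_le _
  have h2 : Tendsto (fun n : ℕ => t - ((2 : ℝ) ^ n)⁻¹) atTop (𝓝 t) := by
    simpa using tendsto_const_nhds.sub
      (tendsto_inv_atTop_zero.comp (tendsto_pow_atTop_atTop_of_one_lt (one_lt_two (α := ℝ))))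
  exact tendsto_of_tendsto_of_tendsto_of_le_of_le h2 tendsto_const_nhds hlow hup

/-- The `ℓ⁴` rather than the `ℓ^∞` norm of the level-`m` increments of `f` on `[0, T]`: its fourth
moment is then the sum of their fourth moments. -/
noncomputable def dyadicIncrementNorm (f : ℝ → ℝ) (T : ℝ) (m : ℕ) : ℝ≥0∞ :=
  (∑ k ∈ Finset.range ⌊(2 : ℝ) ^ m * T⌋₊, edist (f ((k + 1) / 2 ^ m)) (f (k / 2 ^ m)) ^ 4) ^
    (4⁻¹ : ℝ)

lemma dyadicIncrementNorm_pow_four (f : ℝ → ℝ) (T : ℝ) (m : ℕ) :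
    dyadicIncrementNorm f T m ^ 4
      = ∑ k ∈ Finset.range ⌊(2 : ℝ) ^ m * T⌋₊, edist (f ((k + 1) / 2 ^ m)) (f (k / 2 ^ m)) ^ 4 := by
  rw [dyadicIncrementNorm, ← ENNReal.rpow_natCast, ← ENNReal.rpow_mul]
  norm_num

lemma edist_le_dyadicIncrementNorm (f : ℝ → ℝ) {T : ℝ} {m k : ℕ}
    (hk : k < ⌊(2 : ℝ) ^ m * T⌋₊) :
    edist (f ((k + 1) / 2 ^ m)) (f (k / 2 ^ m)) ≤ dyadicIncrementNorm f T m := by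
  calc edist (f ((k + 1) / 2 ^ m)) (f (k / 2 ^ m))
      = (edist (f ((k + 1) / 2 ^ m)) (f (k / 2 ^ m)) ^ 4) ^ (4⁻¹ : ℝ) := by
        rw [← ENNReal.rpow_natCast, ← ENNReal.rpow_mul]; norm_num
    _ ≤ dyadicIncrementNorm f T m := by
        unfold dyadicIncrementNorm
        gcongr
        exact Finset.single_le_sum
          (f := fun k : ℕ => edist (f ((k + 1) / 2 ^ m)) (f (k / 2 ^ m)) ^ 4)
          (fun _ _ => bot_le) (Finset.mem_range.2 hk)

lemma edist_dyadicFloor_succ_le (f : ℝ → ℝ) {t T : ℝ} (ht : 0 ≤ t) (htT : t ≤ T) (N : ℕ) :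
    edist (f (dyadicFloor (N + 1) t)) (f (dyadicFloor N t)) ≤ dyadicIncrementNorm f T (N + 1) := by
  have hjN : ⌊(2 : ℝ) ^ N * t⌋₊ = ⌊(2 : ℝ) ^ (N + 1) * t⌋₊ / 2 := by
    rw [← Nat.floor_div_natCast]; congr 1; push_cast; ring
  have hjT : ⌊(2 : ℝ) ^ (N + 1) * t⌋₊ ≤ ⌊(2 : ℝ) ^ (N + 1) * T⌋₊ := Nat.floor_le_floor (by gcongr)
  rw [dyadicFloor_eq_natFloor _ ht, dyadicFloor_eq_natFloor _ ht, hjN]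
  generalize ⌊(2 : ℝ) ^ (N + 1) * t⌋₊ = j at hjT ⊢
  obtain ⟨k, rfl | rfl⟩ := Nat.even_or_odd' j
  · have hk : (((2 * k / 2 : ℕ) : ℝ)) / 2 ^ N = ((2 * k : ℕ) : ℝ) / 2 ^ (N + 1) := by
      rw [Nat.mul_div_cancel_left k two_pos]; push_cast; ring
    rw [hk, edist_self]
    exact bot_le
  · have hk : (((2 * k + 1) / 2 : ℕ) : ℝ) / 2 ^ N = ((2 * k : ℕ) : ℝ) / 2 ^ (N + 1) := by
      rw [show (2 * k + 1) / 2 = k by omega]; push_cast; ring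
    rw [hk, Nat.cast_succ]
    exact edist_le_dyadicIncrementNorm f (by omega)

lemma edist_dyadicFloor_add_le_sum (f : ℝ → ℝ) {t T : ℝ} (ht : 0 ≤ t) (htT : t ≤ T)
    (n N : ℕ) :
    edist (f (dyadicFloor (n + N) t)) (f (dyadicFloor n t))
      ≤ ∑ m ∈ Finset.range N, dyadicIncrementNorm f T (n + m + 1) := by
  induction N with
  | zero => simp
  | succ N ih =>
    rw [Finset.sum_range_succ, add_comm (Finset.sum _ _)]
    exact (edist_triangle _ (f (dyadicFloor (n + N) t)) _).trans
      (add_le_add (edist_dyadicFloor_succ_le f ht htT _) ih)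

lemma edist_dyadicFloor_le_tsum {f : ℝ → ℝ} {t T : ℝ} (hf : ContinuousAt f t) (ht : 0 ≤ t)
    (htT : t ≤ T) (n : ℕ) :
    edist (f t) (f (dyadicFloor n t)) ≤ ∑' m, dyadicIncrementNorm f T (n + m + 1) := by
  have hlim : Tendsto (fun N => edist (f (dyadicFloor (n + N) t)) (f (dyadicFloor n t))) atTop
      (𝓝 (edist (f t) (f (dyadicFloor n t)))) :=
    (hf.tendsto.comp ((tendsto_dyadicFloor t).comp
      (tendsto_atTop_mono (Nat.le_add_left · n) tendsto_id))).edist tendsto_const_nhds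
  exact le_of_tendsto' hlim fun N =>
    (edist_dyadicFloor_add_le_sum f ht htT n N).trans (ENNReal.sum_le_tsum _)

section

variable {Ω : Type*} {mΩ : MeasurableSpace Ω} {P : Measure Ω}

lemma lintegral_enorm_pow_of_map_eq_gaussianReal {Y : Ω → ℝ} (hY : AEMeasurable Y P) {v : ℝ≥0}
    (hlaw : P.map Y = gaussianReal 0 v) (p : ℕ) :
    ∫⁻ ω, ‖Y ω‖ₑ ^ (2 * p) ∂P = v ^ p * ∫⁻ x, ‖x‖ₑ ^ (2 * p) ∂gaussianReal 0 1 := by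
  rw [← lintegral_enorm_pow_gaussianReal, ← hlaw, lintegral_map' (by fun_prop) hY]

lemma measurable_dyadicIncrementNorm {X : ℝ → Ω → ℝ} (hX : ∀ t, Measurable (X t)) (T : ℝ)
    (m : ℕ) : Measurable fun ω => dyadicIncrementNorm (X · ω) T m := by
  unfold dyadicIncrementNorm
  exact (Finset.measurable_fun_sum _ fun k _ => ((hX _).edist (hX _)).pow_const 4).pow_const _

theorem tendsto_integral_iSup_sq_sub_dyadicFloor {X : ℝ → Ω → ℝ} {T : ℝ}
    (hX : ∀ t, Measurable (X t)) (hcont : ∀ ω, Continuous fun t => X t ω)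
    (hsum : ∑' m, eLpNorm (fun ω => dyadicIncrementNorm (X · ω) T m) 2 P ≠ ∞) :
    Tendsto (fun n : ℕ => ∫ ω, (⨆ t : Set.Icc (0 : ℝ) T, |X t ω - X (dyadicFloor n t) ω|) ^ 2 ∂P)
      atTop (𝓝 0) := by
  set a := fun m => eLpNorm (fun ω => dyadicIncrementNorm (X · ω) T m) 2 P
  set Y : ℕ → Ω → ℝ≥0∞ := fun n ω => ∑' m, dyadicIncrementNorm (X · ω) T (n + m + 1)
  have hsup : ∀ n ω, ‖(⨆ t : Set.Icc (0 : ℝ) T, |X t ω - X (dyadicFloor n t) ω|) ^ 2‖ₑ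
      ≤ Y n ω ^ 2 := fun n ω => by
    rw [enorm_pow, Real.enorm_of_nonneg (Real.iSup_nonneg fun _ => abs_nonneg _)]
    gcongr
    refine ENNReal.ofReal_iSup_le fun t => ?_
    rw [← Real.dist_eq, ← edist_dist]
    exact edist_dyadicFloor_le_tsum (hcont ω).continuousAt t.2.1 t.2.2 n
  have hY : ∀ n, ∫⁻ ω, Y n ω ^ 2 ∂P ≤ (∑' m, a (n + m + 1)) ^ 2 := fun n => by
    rw [lintegral_sq_eq_eLpNorm_sq]
    gcongr
    exact eLpNorm_tsum_le (fun m => (measurable_dyadicIncrementNorm hX T _).aemeasurable)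
      one_le_two ENNReal.ofNat_ne_top
  have htail : Tendsto (fun n => (∑' m, a (n + m + 1)) ^ 2) atTop (𝓝 0) := by
    have h := ((ENNReal.tendsto_sum_nat_add a hsum).comp (tendsto_add_atTop_nat 1)).congr
      fun n => show ∑' m, a (m + (n + 1)) = ∑' m, a (n + m + 1) by
        simp only [add_right_comm n, add_comm _ (n + 1)]
    simpa using ENNReal.Tendsto.pow (n := 2) h
  rw [tendsto_zero_iff_enorm_tendsto_zero]
  refine tendsto_of_tendsto_of_tendsto_of_le_of_le tendsto_const_nhds htail (fun _ => bot_le)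
    fun n => ?_
  exact (enorm_integral_le_lintegral_enorm _).trans ((lintegral_mono (hsup n)).trans (hY n))

lemma lintegral_edist_dyadic_pow_four_le {X : ℝ → Ω → ℝ} {T K : ℝ} {V : ℝ → ℝ → ℝ≥0}
    (hT : 0 ≤ T) (hX : ∀ t, Measurable (X t))
    (hlaw : ∀ s t, 0 ≤ s → s ≤ t → t ≤ T →
      P.map (fun ω => X t ω - X s ω) = gaussianReal 0 (V s t))
    (hV : ∀ s t, 0 ≤ s → s ≤ t → t ≤ T → (V s t : ℝ) ≤ K * (t - s)) {m k : ℕ}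
    (hk : k < ⌊(2 : ℝ) ^ m * T⌋₊) :
    ∫⁻ ω, edist (X ((k + 1) / 2 ^ m) ω) (X (k / 2 ^ m) ω) ^ 4 ∂P
      ≤ ENNReal.ofReal ((K / 2 ^ m) ^ 2) * ∫⁻ x, ‖x‖ₑ ^ 4 ∂gaussianReal 0 1 := by
  have h2m : (0 : ℝ) < 2 ^ m := by positivity
  have hkT : (k + 1 : ℝ) ≤ 2 ^ m * T := by
    have hk' : ((k + 1 : ℕ) : ℝ) ≤ ⌊(2 : ℝ) ^ m * T⌋₊ := Nat.cast_le.2 hk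
    push_cast at hk'
    exact hk'.trans (Nat.floor_le (by positivity))
  have hs : (0 : ℝ) ≤ k / 2 ^ m := by positivity
  have hst : (k : ℝ) / 2 ^ m ≤ (k + 1) / 2 ^ m := by gcongr; linarith
  have htT : ((k : ℝ) + 1) / 2 ^ m ≤ T := by rw [div_le_iff₀ h2m]; linarith
  simp_rw [edist_eq_enorm_sub]
  rw [show (4 : ℕ) = 2 * 2 from rfl, lintegral_enorm_pow_of_map_eq_gaussianReal
    (Y := fun ω => X _ ω - X _ ω) ((hX _).sub (hX _)).aemeasurable (hlaw _ _ hs hst htT)]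
  gcongr
  rw [← ENNReal.ofReal_coe_nnreal, ← ENNReal.ofReal_pow NNReal.zero_le_coe]
  gcongr
  calc (V (k / 2 ^ m) ((k + 1) / 2 ^ m) : ℝ) ≤ K * ((k + 1) / 2 ^ m - k / 2 ^ m) :=
        hV _ _ hs hst htT
    _ = K / 2 ^ m := by ring

lemma lintegral_dyadicIncrementNorm_pow_four_le {X : ℝ → Ω → ℝ} {T K : ℝ} {V : ℝ → ℝ → ℝ≥0}
    (hT : 0 ≤ T) (hX : ∀ t, Measurable (X t))
    (hlaw : ∀ s t, 0 ≤ s → s ≤ t → t ≤ T →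
      P.map (fun ω => X t ω - X s ω) = gaussianReal 0 (V s t))
    (hV : ∀ s t, 0 ≤ s → s ≤ t → t ≤ T → (V s t : ℝ) ≤ K * (t - s)) (m : ℕ) :
    ∫⁻ ω, dyadicIncrementNorm (X · ω) T m ^ 4 ∂P
      ≤ ENNReal.ofReal (T * K ^ 2) * (∫⁻ x, ‖x‖ₑ ^ 4 ∂gaussianReal 0 1) * 2⁻¹ ^ m := by
  set c := ∫⁻ x, ‖x‖ₑ ^ 4 ∂gaussianReal 0 1
  set N := ⌊(2 : ℝ) ^ m * T⌋₊
  calc ∫⁻ ω, dyadicIncrementNorm (X · ω) T m ^ 4 ∂P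
      = ∑ k ∈ Finset.range N, ∫⁻ ω, edist (X ((k + 1) / 2 ^ m) ω) (X (k / 2 ^ m) ω) ^ 4 ∂P := by
        simp_rw [dyadicIncrementNorm_pow_four]
        exact lintegral_finsetSum _ fun k _ => ((hX _).edist (hX _)).pow_const 4
    _ ≤ N * (ENNReal.ofReal ((K / 2 ^ m) ^ 2) * c) := by
        simpa using Finset.sum_le_card_nsmul _ _ _ fun k hk =>
          lintegral_edist_dyadic_pow_four_le hT hX hlaw hV (Finset.mem_range.1 hk)
    _ = N * ENNReal.ofReal ((K / 2 ^ m) ^ 2) * c := by ring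
    _ ≤ ENNReal.ofReal (T * K ^ 2) * 2⁻¹ ^ m * c := by
        refine mul_le_mul_left ?_ c
        rw [← ENNReal.ofReal_natCast, ← ENNReal.ofReal_mul (Nat.cast_nonneg _), ← ENNReal.inv_pow,
          ← ENNReal.ofReal_ofNat 2, ← ENNReal.ofReal_pow zero_le_two,
          ← ENNReal.ofReal_inv_of_pos (by positivity), ← ENNReal.ofReal_mul (by positivity)]
        apply ENNReal.ofReal_le_ofReal
        calc (N : ℝ) * (K / 2 ^ m) ^ 2 ≤ 2 ^ m * T * (K / 2 ^ m) ^ 2 := by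
              gcongr; exact Nat.floor_le (by positivity)
          _ = T * K ^ 2 * (2 ^ m)⁻¹ := by field_simp
    _ = ENNReal.ofReal (T * K ^ 2) * c * 2⁻¹ ^ m := by ring

lemma tsum_eLpNorm_two_ne_top_of_lintegral_pow_four_le [IsProbabilityMeasure P]
    {F : ℕ → Ω → ℝ≥0∞} (hF : ∀ m, AEMeasurable (F m) P) {C r : ℝ≥0∞} (hC : C ≠ ∞) (hr : r < 1)
    (h : ∀ m, ∫⁻ ω, F m ω ^ 4 ∂P ≤ C * r ^ m) :
    ∑' m, eLpNorm (F m) 2 P ≠ ∞ := by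
  have hbound : ∀ m, eLpNorm (F m) 2 P ≤ C ^ (4⁻¹ : ℝ) * (r ^ (4⁻¹ : ℝ)) ^ m := fun m =>
    calc eLpNorm (F m) 2 P ≤ eLpNorm (F m) 4 P :=
          eLpNorm_le_eLpNorm_of_exponent_le (by norm_num) (hF m).aestronglyMeasurable
      _ = (∫⁻ ω, F m ω ^ 4 ∂P) ^ (4⁻¹ : ℝ) := by
          rw [eLpNorm_eq_lintegral_rpow_enorm_toReal (by norm_num) (by norm_num)]
          norm_num
      _ ≤ (C * r ^ m) ^ (4⁻¹ : ℝ) := by gcongr; exact h m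
      _ = C ^ (4⁻¹ : ℝ) * (r ^ (4⁻¹ : ℝ)) ^ m := by
          rw [ENNReal.mul_rpow_of_nonneg _ _ (by norm_num), ← ENNReal.rpow_natCast,
            ← ENNReal.rpow_natCast, ← ENNReal.rpow_mul, ← ENNReal.rpow_mul, mul_comm (m : ℝ)]
  refine ne_top_of_le_ne_top ?_ (ENNReal.tsum_le_tsum hbound)
  rw [ENNReal.tsum_mul_left, ENNReal.tsum_geometric]
  exact ENNReal.mul_ne_top (ENNReal.rpow_ne_top_of_nonneg (by norm_num) hC)
    (ENNReal.inv_ne_top.2 (tsub_pos_of_lt (ENNReal.rpow_lt_one hr (by norm_num))).ne')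

end

/-- With `M(t) = ∫₀ᵗ g dβ` the Wiener integral of a deterministic continuous `g`
(characterized by its centered Gaussian increments and continuous paths), and
`Jₙ(t) = M(t) − M(⌊2ⁿt⌋/2ⁿ)`, one has `E[sup_{0≤t≤T} |Jₙ(t)|²] → 0` as `n → ∞`. -/
theorem wiener_integral_dyadic_tail
    {Ω : Type*} [MeasureSpace Ω] [IsProbabilityMeasure (ℙ : Measure Ω)]
    (T : ℝ) (hT : 0 < T) (g : ℝ → ℝ) (hg : Continuous g)
    (M : ℝ → Ω → ℝ) (hmeas : ∀ t, Measurable (M t))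
    (hcont : ∀ ω, Continuous fun t => M t ω)
    (hgauss : ∀ s t : ℝ, 0 ≤ s → s ≤ t → t ≤ T →
      Measure.map (fun ω => M t ω - M s ω) ℙ
        = gaussianReal 0 (Real.toNNReal (∫ r in s..t, (g r)^2))) :
    Tendsto (fun n : ℕ =>
        ∫ ω, (⨆ t : Set.Icc (0:ℝ) T,
          |M (t:ℝ) ω - M ((⌊(2:ℝ)^n * (t:ℝ)⌋ : ℝ) / (2:ℝ)^n) ω|) ^ 2 ∂ℙ)
      atTop (nhds 0) := by
  obtain ⟨K, hK⟩ := isCompact_Icc.exists_bound_of_continuousOn (hg.pow 2).continuousOn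
  have hV : ∀ s t, 0 ≤ s → s ≤ t → t ≤ T → ((∫ r in s..t, g r ^ 2).toNNReal : ℝ) ≤ K * (t - s) :=
    fun s t hs hst htT => toNNReal_intervalIntegral_le_of_norm_le hst fun r hr =>
      hK r ⟨hs.trans hr.1, hr.2.trans htT⟩
  refine tendsto_integral_iSup_sq_sub_dyadicFloor hmeas hcont
    (tsum_eLpNorm_two_ne_top_of_lintegral_pow_four_le
      (fun m => (measurable_dyadicIncrementNorm hmeas T m).aemeasurable) ?_
      (ENNReal.inv_lt_one.2 ENNReal.one_lt_two)
      (lintegral_dyadicIncrementNorm_pow_four_le hT.le hmeas hgauss hV))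
  exact ENNReal.mul_ne_top ENNReal.ofReal_ne_top (lintegral_enorm_pow_gaussianReal_lt_top 0 1 4).ne
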